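/- Let h ∈ R^n be sorted so that |h₁| ≥ |h₂| ≥ … ≥ |h_n|, let s, k be positive integers with s + k ≤ n, let T₀₁ = {1,…,s+k}, and suppose ‖h_{T₀ᶜ}‖₁ ≥ k|h_{s+k}| where T₀ = {1,…,s}. Then ‖h_{T₀₁ᶜ}‖₂ ≤ ‖h_{T₀ᶜ}‖₁ / (2√k). -/

import Mathlib

open Finset

noncomputable def l1 {n : ℕ} (x : Fin n → ℝ) : ℝ := ∑ i, |x i|
noncomputable def l2 {n : ℕ} (x : Fin n → ℝ) : ℝ := Real.sqrt (∑ i, (x i) ^ 2)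
noncomputable def linf {n : ℕ} (x : Fin n → ℝ) : ℝ := ‖x‖

/-- `restrict T x` is the vector equal to `x` on `T` and `0` elsewhere. -/
def restrict {n : ℕ} (T : Finset (Fin n)) (x : Fin n → ℝ) : Fin n → ℝ :=
  fun i => if i ∈ T then x i else 0

/-- `T` indexes `s` largest-in-absolute-value entries of `h`. -/
def IsMaxS {n : ℕ} (s : ℕ) (h : Fin n → ℝ) (T : Finset (Fin n)) : Prop :=
  T.card = s ∧ ∀ i ∈ T, ∀ j ∉ T, |h j| ≤ |h i|

/-- number of nonzero entries. -/
noncomputable def l0 {n : ℕ} (x : Fin n → ℝ) : ℕ := (Finset.univ.filter fun i => x i ≠ 0).card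

/-
With `t = |h_{s+k}|`, every entry of `h` outside `T₀₁` has modulus at most `t`, so
`‖h_{T₀₁ᶜ}‖₂² ≤ t ‖h_{T₀₁ᶜ}‖₁`, while the `k` entries of `T₀₁ \ T₀` have modulus at least `t`, so
`‖h_{T₀₁ᶜ}‖₁ ≤ ‖h_{T₀ᶜ}‖₁ - k t`. Hence `‖h_{T₀₁ᶜ}‖₂² ≤ t (‖h_{T₀ᶜ}‖₁ - k t)`, and maximising this
quadratic in `t` gives `‖h_{T₀ᶜ}‖₁² / (4k)`.
-/

lemma l1_restrict {n : ℕ} (T : Finset (Fin n)) (x : Fin n → ℝ) :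
    l1 (restrict T x) = ∑ i ∈ T, |x i| := by
  simp [l1, _root_.restrict, apply_ite, Finset.sum_ite_mem]

lemma l2_restrict {n : ℕ} (T : Finset (Fin n)) (x : Fin n → ℝ) :
    l2 (restrict T x) = √(∑ i ∈ T, x i ^ 2) := by
  simp [l2, _root_.restrict, Finset.sum_ite_mem]

lemma sum_sq_le_mul_sum_abs {ι : Type*} (A : Finset ι) (x : ι → ℝ) {t : ℝ}
    (hA_le : ∀ i ∈ A, |x i| ≤ t) : ∑ i ∈ A, x i ^ 2 ≤ t * ∑ i ∈ A, |x i| := by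
  rw [Finset.mul_sum]
  refine Finset.sum_le_sum fun i hi => ?_
  rw [← sq_abs, sq]
  exact mul_le_mul_of_nonneg_right (hA_le i hi) (abs_nonneg _)

lemma mul_sub_mul_le_sq_div {k : ℝ} (hk : 0 < k) (L t : ℝ) :
    t * (L - k * t) ≤ L ^ 2 / (4 * k) := by
  rw [le_div_iff₀ (by positivity)]
  nlinarith [sq_nonneg (L - 2 * k * t)]

lemma sqrt_sum_sq_le_sum_abs_div {ι : Type*} [DecidableEq ι] (x : ι → ℝ) {A B : Finset ι}
    (hAB : Disjoint A B) (hB : B.Nonempty) {t : ℝ} (ht : 0 ≤ t)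
    (hA_le : ∀ i ∈ A, |x i| ≤ t) (hB_ge : ∀ i ∈ B, t ≤ |x i|) :
    √(∑ i ∈ A, x i ^ 2) ≤ (∑ i ∈ A ∪ B, |x i|) / (2 * √(#B : ℝ)) := by
  set L := ∑ i ∈ A ∪ B, |x i|
  have hk : (0 : ℝ) < #B := by exact_mod_cast hB.card_pos
  have hmiddle : #B * t ≤ ∑ i ∈ B, |x i| := by
    simpa using Finset.sum_le_sum hB_ge
  have htail : ∑ i ∈ A, |x i| ≤ L - #B * t := by
    have hL : L = ∑ i ∈ A, |x i| + ∑ i ∈ B, |x i| := Finset.sum_union hAB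
    linarith
  have hsq : ∑ i ∈ A, x i ^ 2 ≤ (L / (2 * √(#B : ℝ))) ^ 2 := calc
    ∑ i ∈ A, x i ^ 2 ≤ t * ∑ i ∈ A, |x i| := sum_sq_le_mul_sum_abs A x hA_le
    _ ≤ t * (L - #B * t) := mul_le_mul_of_nonneg_left htail ht
    _ ≤ L ^ 2 / (4 * #B) := mul_sub_mul_le_sq_div hk L t
    _ = (L / (2 * √(#B : ℝ))) ^ 2 := by
      rw [div_pow, mul_pow, Real.sq_sqrt hk.le]
      norm_num
  exact Real.sqrt_le_iff.mpr ⟨by positivity, hsq⟩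

theorem stmt6 {n : ℕ} (h : Fin n → ℝ) (s k : ℕ) (hk : 0 < k)
    (hsk : s + k ≤ n)
    (hsorted : ∀ i j : Fin n, i ≤ j → |h j| ≤ |h i|)
    (T0 : Finset (Fin n)) (hT0 : T0 = (Finset.univ : Finset (Fin n)).filter (fun i : Fin n => (i : ℕ) < s))
    (T01 : Finset (Fin n)) (hT01 : T01 = (Finset.univ : Finset (Fin n)).filter (fun i : Fin n => (i : ℕ) < s + k)) :
    l2 (restrict T01ᶜ h) ≤ l1 (restrict T0ᶜ h) / (2 * Real.sqrt k) := by
  set p : Fin n := ⟨s + k - 1, by omega⟩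
  have hsub : T0 ⊆ T01 := by
    subst hT0 hT01
    intro i
    simp only [mem_filter, mem_univ, true_and]
    omega
  have hcard : #(T01 \ T0) = k := by
    rw [Finset.card_sdiff_of_subset hsub, hT0, hT01, Fin.card_filter_val_lt, Fin.card_filter_val_lt]
    omega
  have hunion : T01ᶜ ∪ (T01 \ T0) = T0ᶜ := by
    ext i
    subst hT0 hT01
    simp only [mem_union, mem_compl, mem_sdiff, mem_filter, mem_univ, true_and]
    omega
  have htail : ∀ i ∈ T01ᶜ, |h i| ≤ |h p| := by
    subst hT01
    intro i hi
    simp only [mem_compl, mem_filter, mem_univ, true_and] at hi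
    exact hsorted p i (Fin.le_def.mpr (show s + k - 1 ≤ (i : ℕ) by omega))
  have hmiddle : ∀ i ∈ T01 \ T0, |h p| ≤ |h i| := by
    subst hT0 hT01
    intro i hi
    simp only [mem_sdiff, mem_filter, mem_univ, true_and] at hi
    exact hsorted i p (Fin.le_def.mpr (show (i : ℕ) ≤ s + k - 1 by omega))
  have key := sqrt_sum_sq_le_sum_abs_div h (disjoint_compl_left.mono_right sdiff_subset)
    (Finset.card_pos.mp (by omega)) (abs_nonneg (h p)) htail hmiddle
  rwa [hunion, hcard, ← l2_restrict, ← l1_restrict] at key
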